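/- Let m be a positive integer, Ω₁, Ω₂ > 0, ρ ∈ (0,1), and let f be the bivariate Nakagami-m joint PDF with these parameters. Then for all r₁, r₂ ≥ 0, the joint CCDF satisfies F̄(r₁,r₂) = ∫_{r₁}^∞ ∫_{r₂}^∞ f(x,y) dy dx = (2 m^m / Γ(m)) · ℋ_m( r₁/√Ω₁, √(2mρ/(1−ρ)), (r₂/√Ω₂)·√(2m/(1−ρ)) ). -/

import Mathlib

open MeasureTheory Real Finset

/-- Modified Bessel function of the first kind of nonnegative integer order. -/
noncomputable def besselI (n : ℕ) (x : ℝ) : ℝ :=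
  ∑' k : ℕ, (x / 2) ^ (2 * k + n) / (k.factorial * (k + n).factorial)

/-- Generalized Marcum Q-function of positive integer order `m`. -/
noncomputable def marcumQ (m : ℕ) (a b : ℝ) : ℝ :=
  a ^ (-((m : ℤ) - 1)) *
    ∫ x in Set.Ioi b, x ^ m * Real.exp (-(x ^ 2 + a ^ 2) / 2) * besselI (m - 1) (a * x)

/-- The incomplete integral `ℋ_m(u,γ,δ)` of the Marcum Q-function. -/
noncomputable def Hm (m : ℕ) (u γ δ : ℝ) : ℝ :=
  ∫ x in Set.Ioi u, x ^ (2 * m - 1) * Real.exp (-(m : ℝ) * x ^ 2) * marcumQ m (γ * x) δ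

/-- Joint PDF of two correlated Nakagami-`m` random variables with powers `Ω₁, Ω₂`
and power correlation coefficient `ρ`. -/
noncomputable def nakPDF (m : ℕ) (Ω₁ Ω₂ ρ : ℝ) (r₁ r₂ : ℝ) : ℝ :=
  4 * (m : ℝ) ^ (m + 1) * (r₁ * r₂) ^ m /
      (Real.Gamma m * Ω₁ * Ω₂ * (1 - ρ) * Real.sqrt (Ω₁ * Ω₂ * ρ) ^ (m - 1)) *
    Real.exp (-((m : ℝ) / (1 - ρ)) * (r₁ ^ 2 / Ω₁ + r₂ ^ 2 / Ω₂)) *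
    besselI (m - 1) (2 * m * Real.sqrt ρ * r₁ * r₂ / (Real.sqrt (Ω₁ * Ω₂) * (1 - ρ)))

/-!
The substitution `x = √Ω₁ u`, `y = √Ω₂ v` reduces the joint CCDF to the case `Ω₁ = Ω₂ = 1`.
There, with `w = √((1 - ρ) / (2m))` and `γ = √(2mρ / (1 - ρ))`, the substitution `v = w t`
turns the exponent into `-m u² - (t² + (γ u)²) / 2` and the Bessel argument into `γ u t`, so the
inner integral over `v > v₀` equals `(2 m^m / Γ(m)) u^(2m-1) e^{-m u²} Q_m(γ u, v₀ / w)`.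
Integrating in `u` gives `ℋ_m`.
Only linear substitutions and constant factors are involved, so no integrability is needed.
-/

section NakagamiCCDF

variable {m : ℕ} {Ω₁ Ω₂ ρ : ℝ}

lemma setIntegral_Ioi_eq_smul_comp_mul {E : Type*} [NormedAddCommGroup E] [NormedSpace ℝ E]
    {c : ℝ} (hc : 0 < c) (f : ℝ → E) (r : ℝ) :
    ∫ x in Set.Ioi r, f x = c • ∫ u in Set.Ioi (r / c), f (c * u) := by
  rw [integral_comp_mul_left_Ioi' f _ hc, mul_div_cancel₀ r hc.ne']

lemma marcumQ_eq_inv_pow_mul (hm : 0 < m) (a b : ℝ) :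
    marcumQ m a b = (a ^ (m - 1))⁻¹ *
      ∫ x in Set.Ioi b, x ^ m * exp (-(x ^ 2 + a ^ 2) / 2) * besselI (m - 1) (a * x) := by
  rw [marcumQ, ← Nat.cast_one, ← Nat.cast_sub hm, zpow_neg, zpow_natCast]

lemma nakPDF_sqrt_mul_sqrt_mul (hm : 0 < m) (hΩ₁ : 0 < Ω₁) (hΩ₂ : 0 < Ω₂) (u v : ℝ) :
    nakPDF m Ω₁ Ω₂ ρ (√Ω₁ * u) (√Ω₂ * v) = (√Ω₁ * √Ω₂)⁻¹ * nakPDF m 1 1 ρ u v := by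
  obtain ⟨n, rfl⟩ : ∃ n, m = n + 1 := ⟨m - 1, by omega⟩
  obtain ⟨A, hA, rfl⟩ : ∃ A > 0, A ^ 2 = Ω₁ := ⟨√Ω₁, Real.sqrt_pos.mpr hΩ₁, Real.sq_sqrt hΩ₁.le⟩
  obtain ⟨B, hB, rfl⟩ : ∃ B > 0, B ^ 2 = Ω₂ := ⟨√Ω₂, Real.sqrt_pos.mpr hΩ₂, Real.sq_sqrt hΩ₂.le⟩
  have hsq : ∀ {C : ℝ}, 0 < C → ∀ x : ℝ, (C * x) ^ 2 / C ^ 2 = x ^ 2 / 1 := fun hC x => by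
    field_simp
  have harg : ∀ c : ℝ, c * (A * u) * (B * v) / (A * B * (1 - ρ)) = c * u * v / (1 - ρ) :=
    fun c => by field_simp
  simp only [nakPDF, hsq hA, hsq hB, harg, ← mul_pow, Real.sqrt_mul (sq_nonneg (A * B)),
    Real.sqrt_sq hA.le, Real.sqrt_sq hB.le, Real.sqrt_sq (mul_pos hA hB).le, mul_one,
    Real.sqrt_one, one_mul, Nat.add_sub_cancel]
  -- `1 - ρ` and `√ρ` may vanish: split the inverses so that `field_simp` cancels just `A` and `B`.
  simp only [mul_pow, div_eq_mul_inv, mul_inv]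
  field_simp
  ring

lemma setIntegral_Ioi_Ioi_nakPDF (hm : 0 < m) (hΩ₁ : 0 < Ω₁) (hΩ₂ : 0 < Ω₂) (r₁ r₂ : ℝ) :
    ∫ x in Set.Ioi r₁, ∫ y in Set.Ioi r₂, nakPDF m Ω₁ Ω₂ ρ x y =
      ∫ u in Set.Ioi (r₁ / √Ω₁), ∫ v in Set.Ioi (r₂ / √Ω₂), nakPDF m 1 1 ρ u v := by
  have hs₁ := Real.sqrt_pos.mpr hΩ₁
  have hs₂ := Real.sqrt_pos.mpr hΩ₂
  simp_rw [setIntegral_Ioi_eq_smul_comp_mul hs₁ _ r₁,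
    setIntegral_Ioi_eq_smul_comp_mul hs₂ _ r₂, nakPDF_sqrt_mul_sqrt_mul hm hΩ₁ hΩ₂,
    integral_const_mul, smul_eq_mul, integral_const_mul]
  field_simp

lemma nakPDF_one_one_mul_sqrt (hm : 0 < m) (hρ₀ : 0 ≤ ρ) (hρ₁ : ρ < 1) (u t : ℝ) :
    nakPDF m 1 1 ρ u (√((1 - ρ) / (2 * m)) * t) =
      4 * m ^ (m + 1) * √((1 - ρ) / (2 * m)) ^ m / (Gamma m * (1 - ρ) * √ρ ^ (m - 1)) *
        (u ^ m * exp (-m * u ^ 2)) *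
        (t ^ m * exp (-(t ^ 2 + (√(2 * m * ρ / (1 - ρ)) * u) ^ 2) / 2) *
          besselI (m - 1) (√(2 * m * ρ / (1 - ρ)) * u * t)) := by
  have hM : (0 : ℝ) < m := Nat.cast_pos.mpr hm
  have hε : 0 < 1 - ρ := sub_pos.mpr hρ₁
  set w := √((1 - ρ) / (2 * m))
  set γ := √(2 * m * ρ / (1 - ρ))
  have hw2 : w ^ 2 = (1 - ρ) / (2 * m) := Real.sq_sqrt (by positivity)
  have hγ2 : γ ^ 2 = 2 * m * ρ / (1 - ρ) := Real.sq_sqrt (by positivity)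
  have hwγ : w * γ = √ρ := by
    rw [← Real.sqrt_mul (by positivity)]
    congr 1
    field_simp
  have hexp : -(m / (1 - ρ)) * (u ^ 2 / 1 + (w * t) ^ 2 / 1) =
      -m * u ^ 2 + -(t ^ 2 + (γ * u) ^ 2) / 2 := by
    rw [mul_pow, mul_pow, hw2, hγ2]
    field_simp
    ring
  have harg : 2 * m * √ρ * u * (w * t) / (1 - ρ) = γ * u * t := by
    rw [← hwγ]
    field_simp
    rw [hw2]
    field_simp
  simp only [nakPDF, hexp, Real.exp_add, mul_one, one_mul, Real.sqrt_one, harg]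
  ring

lemma setIntegral_Ioi_nakPDF_one_one (hm : 0 < m) (hρ₀ : 0 < ρ) (hρ₁ : ρ < 1) (u v₀ : ℝ) :
    ∫ v in Set.Ioi v₀, nakPDF m 1 1 ρ u v =
      2 * m ^ m / Gamma m * (u ^ (2 * m - 1) * exp (-(m : ℝ) * u ^ 2) *
        marcumQ m (√(2 * m * ρ / (1 - ρ)) * u) (v₀ * √(2 * m / (1 - ρ)))) := by
  rcases eq_or_ne u 0 with rfl | hu
  · have : 2 * m - 1 ≠ 0 := by omega
    simp [nakPDF, hm.ne', this]
  have hM : (0 : ℝ) < m := Nat.cast_pos.mpr hm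
  have hε : 0 < 1 - ρ := sub_pos.mpr hρ₁
  have hw : 0 < √((1 - ρ) / (2 * m)) := Real.sqrt_pos.mpr (by positivity)
  have hδ : v₀ / √((1 - ρ) / (2 * m)) = v₀ * √(2 * m / (1 - ρ)) := by
    rw [div_eq_mul_inv, ← Real.sqrt_inv, inv_div]
  rw [setIntegral_Ioi_eq_smul_comp_mul hw, hδ]
  simp_rw [nakPDF_one_one_mul_sqrt hm hρ₀.le hρ₁, integral_const_mul]
  set w := √((1 - ρ) / (2 * m))
  set γ := √(2 * m * ρ / (1 - ρ))
  have hγ : 0 < γ := Real.sqrt_pos.mpr (by positivity)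
  have hw2 : w ^ 2 = (1 - ρ) / (2 * m) := Real.sq_sqrt (by positivity)
  have hwγ : w * γ = √ρ := by
    rw [← Real.sqrt_mul (by positivity)]
    congr 1
    field_simp
  rw [← mul_inv_cancel_left₀ (pow_ne_zero (m - 1) (mul_ne_zero hγ.ne' hu)) (∫ _ in _, _),
    ← marcumQ_eq_inv_pow_mul hm]
  obtain ⟨n, rfl⟩ : ∃ n, m = n + 1 := ⟨m - 1, by omega⟩
  rw [show 2 * (n + 1) - 1 = n + 1 + n by omega, Nat.add_sub_cancel, smul_eq_mul, ← hwγ]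
  generalize marcumQ _ _ _ = Q
  have hε' : 1 - ρ = 2 * (n + 1 : ℕ) * w ^ 2 := by
    rw [hw2]
    field_simp
  rw [hε']
  field_simp
  ring

end NakagamiCCDF

theorem nakagami_ccdf_eq_Hm_general (m : ℕ) (hm : 0 < m) (Ω₁ Ω₂ : ℝ) (hΩ₁ : 0 < Ω₁) (hΩ₂ : 0 < Ω₂)
    (ρ : ℝ) (hρ : ρ ∈ Set.Ioo (0 : ℝ) 1) (r₁ r₂ : ℝ) :
    (∫ x in Set.Ioi r₁, ∫ y in Set.Ioi r₂, nakPDF m Ω₁ Ω₂ ρ x y) =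
      2 * (m : ℝ) ^ m / Real.Gamma m *
        Hm m (r₁ / Real.sqrt Ω₁) (Real.sqrt (2 * m * ρ / (1 - ρ)))
          (r₂ / Real.sqrt Ω₂ * Real.sqrt (2 * m / (1 - ρ))) := by
  simp_rw [setIntegral_Ioi_Ioi_nakPDF hm hΩ₁ hΩ₂, setIntegral_Ioi_nakPDF_one_one hm hρ.1 hρ.2,
    integral_const_mul, Hm]

theorem nakagami_ccdf_eq_Hm (m : ℕ) (hm : 0 < m) (Ω₁ Ω₂ : ℝ) (hΩ₁ : 0 < Ω₁) (hΩ₂ : 0 < Ω₂)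
    (ρ : ℝ) (hρ : ρ ∈ Set.Ioo (0 : ℝ) 1) (r₁ r₂ : ℝ) (h₁ : 0 ≤ r₁) (h₂ : 0 ≤ r₂) :
    (∫ x in Set.Ioi r₁, ∫ y in Set.Ioi r₂, nakPDF m Ω₁ Ω₂ ρ x y) =
      2 * (m : ℝ) ^ m / Real.Gamma m *
        Hm m (r₁ / Real.sqrt Ω₁) (Real.sqrt (2 * m * ρ / (1 - ρ)))
          (r₂ / Real.sqrt Ω₂ * Real.sqrt (2 * m / (1 - ρ))) :=
  nakagami_ccdf_eq_Hm_general m hm Ω₁ Ω₂ hΩ₁ hΩ₂ ρ hρ r₁ r₂
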